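/- If C ∈ B³(δ), i.e., E‖C(x) − x‖² ≤ (1 − 1/δ)‖x‖² for all x with δ > 0, then δ ≥ 1, and moreover C ∈ B²(1/(2δ), 2): for all x, (1/(2δ))‖x‖² ≤ ⟨E[C(x)], x⟩ and E‖C(x)‖² ≤ 2⟨E[C(x)], x⟩. -/

import Mathlib

/-!
Expanding the square, `E‖C x - x‖² = E‖C x‖² - 2⟪E[C x], x⟫ + ‖x‖²`, so the hypothesis reads
`E‖C x‖² + ‖x‖²/δ ≤ 2⟪E[C x], x⟫`, and both bounds follow because each summand on the left is
nonnegative. Nonnegativity of `E‖C x - x‖²` at a nonzero `x` forces `1 - 1/δ ≥ 0`.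
-/

open MeasureTheory

section

variable {Ω E : Type*} [MeasurableSpace Ω] {μ : Measure Ω} [NormedAddCommGroup E]

theorem one_le_of_integral_norm_sub_sq_le {X : Ω → E} {x : E} (hx : x ≠ 0) {δ : ℝ}
    (hδ : 0 < δ) (hB : ∫ ω, ‖X ω - x‖ ^ 2 ∂μ ≤ (1 - 1 / δ) * ‖x‖ ^ 2) : 1 ≤ δ := by
  have hx2 : 0 < ‖x‖ ^ 2 := by positivity
  have hdiff : 0 ≤ (1 - 1 / δ) * ‖x‖ ^ 2 :=
    (integral_nonneg fun ω => sq_nonneg ‖X ω - x‖).trans hB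
  have : 1 / δ ≤ 1 := by nlinarith
  exact (div_le_one hδ).mp this

variable [InnerProductSpace ℝ E] [CompleteSpace E] [IsProbabilityMeasure μ]

theorem integral_norm_sub_sq {X : Ω → E} (hX : Integrable X μ)
    (hX2 : Integrable (fun ω => ‖X ω‖ ^ 2) μ) (x : E) :
    ∫ ω, ‖X ω - x‖ ^ 2 ∂μ
      = ∫ ω, ‖X ω‖ ^ 2 ∂μ - 2 * inner ℝ (∫ ω, X ω ∂μ) x + ‖x‖ ^ 2 := by
  have hinner : Integrable (fun ω => 2 * inner ℝ (X ω) x) μ :=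
    (hX.inner_const x).const_mul 2
  have hdiff : Integrable (fun ω => ‖X ω‖ ^ 2 - 2 * inner ℝ (X ω) x) μ := hX2.sub hinner
  simp_rw [norm_sub_sq_real]
  rw [integral_add hdiff (integrable_const _), integral_sub hX2 hinner, integral_const_mul,
    integral_const, probReal_univ, one_smul]
  simp_rw [real_inner_comm x]
  rw [integral_inner hX]

theorem integral_norm_sq_add_le_two_inner {X : Ω → E} (hX : Integrable X μ)
    (hX2 : Integrable (fun ω => ‖X ω‖ ^ 2) μ) {x : E} {δ : ℝ}
    (hB : ∫ ω, ‖X ω - x‖ ^ 2 ∂μ ≤ (1 - 1 / δ) * ‖x‖ ^ 2) :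
    ∫ ω, ‖X ω‖ ^ 2 ∂μ + 1 / δ * ‖x‖ ^ 2 ≤ 2 * inner ℝ (∫ ω, X ω ∂μ) x := by
  rw [integral_norm_sub_sq hX hX2] at hB
  linarith

end

/-- If `C ∈ B³(δ)`, i.e. `E‖C(x) − x‖² ≤ (1 − 1/δ)‖x‖²` for all `x` with `δ > 0`,
then `δ ≥ 1`, and moreover `C ∈ B²(1/(2δ), 2)`: for all `x`,
`(1/(2δ))‖x‖² ≤ ⟨E[C(x)], x⟩` and `E‖C(x)‖² ≤ 2⟨E[C(x)], x⟩`. -/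
theorem stmt5 {d : ℕ} (hd : 0 < d) {Ω : Type*} [MeasurableSpace Ω]
    (μ : Measure Ω) [IsProbabilityMeasure μ]
    (C : EuclideanSpace ℝ (Fin d) → Ω → EuclideanSpace ℝ (Fin d))
    (δ : ℝ) (hδ : 0 < δ)
    (hintC : ∀ x, Integrable (C x) μ)
    (hintC2 : ∀ x, Integrable (fun ω => ‖C x ω‖ ^ 2) μ)
    (hB : ∀ x, ∫ ω, ‖C x ω - x‖ ^ 2 ∂μ ≤ (1 - 1 / δ) * ‖x‖ ^ 2) :
    δ ≥ 1 ∧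
    ∀ x, (1 / (2 * δ)) * ‖x‖ ^ 2 ≤ (inner ℝ (∫ ω, C x ω ∂μ) x : ℝ) ∧
      ∫ ω, ‖C x ω‖ ^ 2 ∂μ ≤ 2 * (inner ℝ (∫ ω, C x ω ∂μ) x : ℝ) := by
  have he : EuclideanSpace.single (⟨0, hd⟩ : Fin d) (1 : ℝ) ≠ 0 := by simp
  refine ⟨one_le_of_integral_norm_sub_sq_le he hδ (hB _), fun x => ?_⟩
  have hsum := integral_norm_sq_add_le_two_inner (hintC x) (hintC2 x) (hB x)
  have hsq : 0 ≤ ∫ ω, ‖C x ω‖ ^ 2 ∂μ := integral_nonneg fun ω => sq_nonneg _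
  have hx : 0 ≤ 1 / δ * ‖x‖ ^ 2 := by positivity
  constructor
  · have hhalf : 1 / (2 * δ) * ‖x‖ ^ 2 = 1 / δ * ‖x‖ ^ 2 / 2 := by ring
    linarith
  · linarith
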